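/- Let J be a 2-torsion free Jordan ring with nontrivial idempotent e satisfying conditions (i)–(iii), and φ : J → J' a bijective n-multiplicative isomorphism onto a Jordan ring J'. Then φ is additive on J₀: φ(a + b) = φ(a) + φ(b) for all a, b ∈ J₀. -/

import Mathlib

/-!
Surjectivity gives `c` with `φ c = φ a + φ b`, and `n`-multiplicativity transports such a relation
into every slot of a right-normed monomial of degree `n`. Filling the other slots with `2e` applies
the operator `L_{2e}`, which fixes `J_{1/2}`, kills `J₀` and maps `J₁ ⊕ J₀` into `J₁`; filling them
with elements of `J₀` and using conditions (i)–(iii) then identifies `c` componentwise. This gives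
additivity of `φ` successively on `J₁ × J_{1/2}`, `J_{1/2} × J₀` and `J_{1/2} × (J₁ ⊕ J₀)`. For
`w ∈ J_{1/2}` and `a, b ∈ J₀`, evaluating `φ` on `(2e)^m ((w + 2e)(w b + a))` in two ways gives
`φ (w a + w b) = φ (w a) + φ (w b)`, and from this `(c - a - b) w = 0` for every `w ∈ J_{1/2}`,
whence `c = a + b` by (i).
-/

/-- Peirce 1-component relative to `e`: elements `x` with `e*x = x`. -/
def peirce1 {J : Type*} [Mul J] (e : J) : Set J := {x | e * x = x}

/-- Peirce 1/2-component relative to `e`: elements `x` with `e*x = (1/2)x`, i.e. `e*x + e*x = x`. -/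
def peirceHalf {J : Type*} [Mul J] [Add J] (e : J) : Set J := {x | e * x + e * x = x}

/-- Peirce 0-component relative to `e`: elements `x` with `e*x = 0`. -/
def peirce0 {J : Type*} [Mul J] [Zero J] (e : J) : Set J := {x | e * x = 0}

/-- The right-normed nonassociative monomial `x₁(x₂(⋯(x_{n-1}x_n)⋯))` on a list of arguments. -/
def rnm {J : Type*} [Mul J] [Zero J] : List J → J
  | [] => 0
  | [x] => x
  | x :: y :: l => x * rnm (y :: l)

/-- `φ` is an `n`-multiplicative map (w.r.t. the right-normed monomial of degree `n`). -/
def IsNMulMap {J J' : Type*} [Mul J] [Zero J] [Mul J'] [Zero J'] (n : ℕ) (φ : J → J') : Prop :=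
  ∀ l : List J, l.length = n → φ (rnm l) = rnm (l.map φ)

section Monomial

variable {R : Type*}

def chainMul [Mul R] (l : List R) (x : R) : R := l.foldr (· * ·) x

@[simp] theorem chainMul_nil [Mul R] (x : R) : chainMul [] x = x := rfl

@[simp] theorem chainMul_cons [Mul R] (a : R) (l : List R) (x : R) :
    chainMul (a :: l) x = a * chainMul l x := rfl

theorem chainMul_append [Mul R] (l₁ l₂ : List R) (x : R) :
    chainMul (l₁ ++ l₂) x = chainMul l₁ (chainMul l₂ x) :=
  List.foldr_append

@[simp] theorem chainMul_concat [Mul R] (l : List R) (a x : R) :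
    chainMul (l ++ [a]) x = chainMul l (a * x) :=
  chainMul_append l [a] x

theorem chainMul_replicate_succ' [Mul R] (k : ℕ) (a x : R) :
    chainMul (.replicate (k + 1) a) x = chainMul (.replicate k a) (a * x) := by
  rw [List.replicate_succ', chainMul_concat]

variable [NonUnitalNonAssocRing R]

@[simp] theorem chainMul_zero (l : List R) : chainMul l (0 : R) = 0 := by
  induction l <;> simp [*]

@[simp] theorem chainMul_add (l : List R) (x y : R) :
    chainMul l (x + y) = chainMul l x + chainMul l y := by
  induction l <;> simp [*, mul_add]

@[simp] theorem chainMul_sub (l : List R) (x y : R) :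
    chainMul l (x - y) = chainMul l x - chainMul l y := by
  induction l <;> simp [*, mul_sub]

theorem rnm_cons_of_ne_nil (x : R) {l : List R} (hl : l ≠ []) : rnm (x :: l) = x * rnm l := by
  cases l with
  | nil => exact absurd rfl hl
  | cons y t => rfl

@[simp] theorem rnm_singleton (x : R) : rnm [x] = x := rfl

@[simp] theorem rnm_pair (x y : R) : rnm [x, y] = x * y := rfl

theorem rnm_append (l₁ : List R) {l₂ : List R} (hl₂ : l₂ ≠ []) :
    rnm (l₁ ++ l₂) = chainMul l₁ (rnm l₂) := by
  induction l₁ with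
  | nil => rfl
  | cons a t ih => rw [List.cons_append, rnm_cons_of_ne_nil _ (by simp [hl₂]), ih, chainMul_cons]

theorem rnm_append_cons_add (l₁ l₂ : List R) (x y : R) :
    rnm (l₁ ++ (x + y) :: l₂) = rnm (l₁ ++ x :: l₂) + rnm (l₁ ++ y :: l₂) := by
  simp only [rnm_append l₁ (List.cons_ne_nil _ l₂), ← chainMul_add]
  cases l₂ with
  | nil => rfl
  | cons a t => exact congrArg _ (add_mul x y _)

end Monomial

section NMulMap

variable {R R' : Type*} [NonUnitalNonAssocRing R] [NonUnitalNonAssocRing R'] {φ : R → R'}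

theorem IsNMulMap.map_zero {m : ℕ} (hmul : IsNMulMap (m + 2) φ) (hφ : Function.Surjective φ) :
    φ 0 = 0 := by
  obtain ⟨x, hx⟩ := hφ 0
  have h := hmul (.replicate (m + 1) 0 ++ [x]) (by simp)
  rwa [rnm_append _ (List.cons_ne_nil x []), List.map_append, List.map_replicate,
    List.map_singleton, rnm_append _ (List.cons_ne_nil _ []), rnm_singleton, rnm_singleton, hx,
    chainMul_zero, List.replicate_succ, chainMul_cons, zero_mul] at h

variable {n : ℕ} (hmul : IsNMulMap n φ) {A B C : R}
include hmul

theorem IsNMulMap.map_rnm_of_map_eq_add (h : φ C = φ A + φ B) (l₁ l₂ : List R)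
    (hlen : l₁.length + l₂.length + 1 = n) :
    φ (rnm (l₁ ++ C :: l₂)) = φ (rnm (l₁ ++ A :: l₂)) + φ (rnm (l₁ ++ B :: l₂)) := by
  have hlen' (X : R) : (l₁ ++ X :: l₂).length = n := by simp; omega
  simp only [hmul _ (hlen' _), List.map_append, List.map_cons, h]
  exact rnm_append_cons_add _ _ _ _

theorem IsNMulMap.map_chainMul_of_map_eq_add (h : φ C = φ A + φ B) (s : List R)
    (hs : s.length + 1 = n) :
    φ (chainMul s C) = φ (chainMul s A) + φ (chainMul s B) := by
  simpa [rnm_append s (List.cons_ne_nil _ [])] using hmul.map_rnm_of_map_eq_add h s [] hs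

theorem IsNMulMap.map_chainMul_mul_of_map_eq_add (h : φ C = φ A + φ B) (s : List R) (w : R)
    (hs : s.length + 2 = n) :
    φ (chainMul s (C * w)) = φ (chainMul s (A * w)) + φ (chainMul s (B * w)) := by
  simpa [rnm_append s (List.cons_ne_nil _ [w])] using hmul.map_rnm_of_map_eq_add h s [w] hs

end NMulMap

section Jordan

variable {J : Type*} [NonUnitalNonAssocCommRing J]

theorem IsCommJordan.of_jordan_identity (h : ∀ x y : J, x * x * y * x = x * x * (y * x)) :
    IsCommJordan J where
  lmul_comm_rmul_rmul a b :=
    calc a * b * (a * a) = a * a * (b * a) := by rw [mul_comm (a * b), mul_comm a b]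
      _ = a * a * b * a := (h a b).symm
      _ = a * (b * (a * a)) := by rw [mul_comm _ a, mul_comm (a * a) b]

variable [IsCommJordan J]

theorem jordan_identity (x y : J) : x * x * y * x = x * x * (y * x) :=
  calc x * x * y * x = x * (y * (x * x)) := by rw [mul_comm _ x, mul_comm (x * x) y]
    _ = x * y * (x * x) := (IsCommJordan.lmul_comm_rmul_rmul x y).symm
    _ = x * x * (y * x) := by rw [mul_comm (x * y), mul_comm x y]

variable (h2 : ∀ x : J, x + x = 0 → x = 0)
include h2

/-- The part of the Jordan identity for `x + z` that is quadratic in `x` and linear in `z`; it is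
isolated by comparing the identities for `x + z`, `x - z` and `z`. -/
theorem jordan_identity_linearized (x z y : J) :
    x * x * y * z + (x * z + z * x) * y * x = x * x * (y * z) + (x * z + z * x) * (y * x) := by
  have key :
      ((x + z) * (x + z) * y * (x + z) - (x + z) * (x + z) * (y * (x + z)))
        - ((x - z) * (x - z) * y * (x - z) - (x - z) * (x - z) * (y * (x - z)))
        - ((z * z * y * z - z * z * (y * z)) + (z * z * y * z - z * z * (y * z)))
      = (x * x * y * z + (x * z + z * x) * y * x - (x * x * (y * z) + (x * z + z * x) * (y * x)))
        + (x * x * y * z + (x * z + z * x) * y * x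
          - (x * x * (y * z) + (x * z + z * x) * (y * x))) := by
    simp only [sub_mul, mul_sub, add_mul, mul_add]
    abel
  simp only [jordan_identity, sub_self, add_zero] at key
  exact sub_eq_zero.mp (h2 _ key.symm)

theorem jordan_identity_linearized₂ (x w u : J) :
    (x * w + w * x) * u * u + (x * u + u * x) * u * w + (w * u + u * w) * u * x
      = (x * w + w * x) * (u * u) + (x * u + u * x) * (u * w) + (w * u + u * w) * (u * x) := by
  have key :
      ((x + w) * (x + w) * u * u + ((x + w) * u + u * (x + w)) * u * (x + w)
        - ((x + w) * (x + w) * (u * u) + ((x + w) * u + u * (x + w)) * (u * (x + w))))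
      - (x * x * u * u + (x * u + u * x) * u * x - (x * x * (u * u) + (x * u + u * x) * (u * x)))
      - (w * w * u * u + (w * u + u * w) * u * w - (w * w * (u * u) + (w * u + u * w) * (u * w)))
      = ((x * w + w * x) * u * u + (x * u + u * x) * u * w + (w * u + u * w) * u * x)
        - ((x * w + w * x) * (u * u) + (x * u + u * x) * (u * w) + (w * u + u * w) * (u * x)) := by
    simp only [add_mul, mul_add]
    abel
  simp only [jordan_identity_linearized h2, sub_self] at key
  exact sub_eq_zero.mp key.symm

end Jordan

/-- `J₁ ⊕ J₀`: the kernel of `L_e² - L_e`. -/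
def peirce10 {J : Type*} [Mul J] (e : J) : Set J := {x | e * (e * x) = e * x}

section Peirce

variable {J : Type*} [NonUnitalNonAssocCommRing J] {e : J}

@[simp] theorem mem_peirce1 {x : J} : x ∈ peirce1 e ↔ e * x = x := Iff.rfl
@[simp] theorem mem_peirceHalf {x : J} : x ∈ peirceHalf e ↔ e * x + e * x = x := Iff.rfl
@[simp] theorem mem_peirce0 {x : J} : x ∈ peirce0 e ↔ e * x = 0 := Iff.rfl
@[simp] theorem mem_peirce10 {x : J} : x ∈ peirce10 e ↔ e * (e * x) = e * x := Iff.rfl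

theorem peirce1_subset_peirce10 : peirce1 e ⊆ peirce10 e := fun x (hx : e * x = x) => by
  simp [hx]

theorem peirce0_subset_peirce10 : peirce0 e ⊆ peirce10 e := fun x (hx : e * x = 0) => by
  simp [hx]

theorem add_mem_peirceHalf {a b : J} (ha : a ∈ peirceHalf e) (hb : b ∈ peirceHalf e) :
    a + b ∈ peirceHalf e := by
  rw [mem_peirceHalf, mul_add, add_add_add_comm, ha, hb]

theorem add_mem_peirce0 {a b : J} (ha : a ∈ peirce0 e) (hb : b ∈ peirce0 e) :
    a + b ∈ peirce0 e := by
  rw [mem_peirce0, mul_add, ha, hb, add_zero]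

theorem add_eq_zero_iff_of_mem_peirce1_of_mem_peirceHalf {a b : J} (ha : a ∈ peirce1 e)
    (hb : b ∈ peirceHalf e) : a + b = 0 ↔ a = 0 ∧ b = 0 := by
  refine ⟨fun h => ?_, fun h => by simp [h]⟩
  rw [mem_peirce1] at ha
  rw [mem_peirceHalf] at hb
  have hb' : b = -a := eq_neg_of_add_eq_zero_right h
  subst hb'
  simp only [mul_neg, ha] at hb
  have : a = 0 := by simpa using (congrArg (· + a + a) hb).symm
  simp [this]

theorem add_eq_zero_iff_of_mem_peirceHalf_of_mem_peirce0 {a b : J} (ha : a ∈ peirceHalf e)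
    (hb : b ∈ peirce0 e) : a + b = 0 ↔ a = 0 ∧ b = 0 := by
  refine ⟨fun h => ?_, fun h => by simp [h]⟩
  rw [mem_peirceHalf] at ha
  rw [mem_peirce0] at hb
  have hea : e * a = 0 := by simpa [mul_add, hb] using congrArg (e * ·) h
  have : a = 0 := by rw [← ha, hea, add_zero]
  simp_all

theorem chainMul_replicate_of_mem_peirceHalf {w : J} (hw : w ∈ peirceHalf e) (k : ℕ) :
    chainMul (.replicate k (e + e)) w = w := by
  induction k with
  | zero => rfl
  | succ k ih => rw [chainMul_replicate_succ', add_mul, hw, ih]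

theorem chainMul_replicate_of_mem_peirce0 {t : J} (ht : t ∈ peirce0 e) {k : ℕ} (hk : k ≠ 0) :
    chainMul (.replicate k (e + e)) t = 0 := by
  obtain ⟨k, rfl⟩ := Nat.exists_eq_succ_of_ne_zero hk
  rw [chainMul_replicate_succ', add_mul, ht, add_zero, chainMul_zero]

theorem chainMul_replicate_mem_peirce1 {p : J} (hp : p ∈ peirce1 e) (k : ℕ) :
    chainMul (.replicate k (e + e)) p ∈ peirce1 e := by
  induction k with
  | zero => exact hp
  | succ k ih =>
    rw [List.replicate_succ, chainMul_cons, mem_peirce1, add_mul, ih, mul_add, ih]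

theorem chainMul_replicate_mem_peirce1_of_mem_peirce10 {v : J} (hv : v ∈ peirce10 e) {k : ℕ}
    (hk : k ≠ 0) : chainMul (.replicate k (e + e)) v ∈ peirce1 e := by
  obtain ⟨k, rfl⟩ := Nat.exists_eq_succ_of_ne_zero hk
  rw [chainMul_replicate_succ']
  refine chainMul_replicate_mem_peirce1 ?_ k
  rw [mem_peirce1, add_mul, mul_add, hv]

theorem chainMul_replicate_mem_peirce10 {v : J} (hv : v ∈ peirce10 e) (k : ℕ) :
    chainMul (.replicate k (e + e)) v ∈ peirce10 e := by
  rcases eq_or_ne k 0 with rfl | hk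
  · exact hv
  · exact peirce1_subset_peirce10 (chainMul_replicate_mem_peirce1_of_mem_peirce10 hv hk)

theorem eq_zero_of_chainMul_replicate_eq_zero (h2 : ∀ x : J, x + x = 0 → x = 0) {p : J}
    (hp : p ∈ peirce1 e) {k : ℕ} (h : chainMul (.replicate k (e + e)) p = 0) : p = 0 := by
  induction k generalizing p with
  | zero => exact h
  | succ k ih =>
    rw [chainMul_replicate_succ', add_mul, hp] at h
    have hpp : p + p ∈ peirce1 e := by rw [mem_peirce1, mul_add, hp]
    exact h2 p (ih hpp h)

end Peirce

section PeirceDecomposition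

variable {J : Type*} [NonUnitalNonAssocCommRing J]

/- Lagrange interpolation for the roots `1, 1/2, 0` of `t (2t - 1) (t - 1)`, the polynomial
annihilating `L_e` by `peirce_cubic`; no division by `2` is needed. -/

def peirceProj1 (e x : J) : J := 2 • (e * (e * x)) - e * x

def peirceProjHalf (e x : J) : J := 4 • (e * x - e * (e * x))

def peirceProj0 (e x : J) : J := x - 3 • (e * x) + 2 • (e * (e * x))

theorem peirceProj1_add_peirceProjHalf_add_peirceProj0 (e x : J) :
    peirceProj1 e x + peirceProjHalf e x + peirceProj0 e x = x := by
  simp only [peirceProj1, peirceProjHalf, peirceProj0]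
  module

end PeirceDecomposition

section PeirceJordan

variable {J : Type*} [NonUnitalNonAssocCommRing J] [IsCommJordan J] {e : J}
  (h2 : ∀ x : J, x + x = 0 → x = 0) (he : e * e = e)
include h2 he

theorem mul_left_comm_of_mem_peirce1 {p : J} (hp : p ∈ peirce1 e) (y : J) :
    e * (p * y) = p * (e * y) := by
  have h := jordan_identity_linearized h2 e p y
  rw [he, hp, mul_comm p e, hp] at h
  simp only [add_mul] at h
  rw [mul_comm (e * y) p, mul_comm (p * y) e, mul_comm y p, mul_comm y e] at h
  linear_combination (norm := module) h

theorem mul_left_comm_of_mem_peirce0 {t : J} (ht : t ∈ peirce0 e) (y : J) :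
    e * (t * y) = t * (e * y) := by
  have h := jordan_identity_linearized h2 e t y
  rw [he, ht, mul_comm t e, ht] at h
  simpa [mul_comm] using h.symm

theorem mul_eq_zero_of_mem_peirce1_of_mem_peirce0 {p t : J} (hp : p ∈ peirce1 e)
    (ht : t ∈ peirce0 e) : p * t = 0 :=
  calc p * t = t * (e * p) := by rw [hp, mul_comm]
    _ = e * (p * t) := by rw [← mul_left_comm_of_mem_peirce0 h2 he ht, mul_comm t]
    _ = 0 := by rw [mul_left_comm_of_mem_peirce1 h2 he hp, ht, mul_zero]

theorem mul_mem_peirceHalf_of_mem_peirce1 {p w : J} (hp : p ∈ peirce1 e)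
    (hw : w ∈ peirceHalf e) : p * w ∈ peirceHalf e := by
  rw [mem_peirceHalf, mul_left_comm_of_mem_peirce1 h2 he hp, ← mul_add, hw]

theorem mul_mem_peirceHalf_of_mem_peirce0 {t w : J} (ht : t ∈ peirce0 e)
    (hw : w ∈ peirceHalf e) : t * w ∈ peirceHalf e := by
  rw [mem_peirceHalf, mul_left_comm_of_mem_peirce0 h2 he ht, ← mul_add, hw]

theorem mul_mem_peirce0_of_mem_peirce10 {t v : J} (ht : t ∈ peirce0 e)
    (hv : v ∈ peirce10 e) : t * v ∈ peirce0 e := by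
  rw [mem_peirce0, mul_left_comm_of_mem_peirce0 h2 he ht, mul_comm]
  exact mul_eq_zero_of_mem_peirce1_of_mem_peirce0 h2 he hv ht

theorem peirce_cubic (x : J) : 2 • (e * (e * (e * x))) + e * x = 3 • (e * (e * x)) := by
  have h := jordan_identity_linearized₂ h2 x e e
  simp only [he, mul_comm x e, add_mul] at h
  rw [mul_comm (e * x) e, mul_comm (e * (e * x)) e] at h
  refine sub_eq_zero.mp (h2 _ ?_)
  linear_combination (norm := module) h

theorem mul_mem_peirce10_of_mem_peirceHalf {w w' : J} (hw : w ∈ peirceHalf e)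
    (hw' : w' ∈ peirceHalf e) : w * w' ∈ peirce10 e := by
  have h := jordan_identity_linearized₂ h2 w w' e
  rw [he, mul_comm w e, mul_comm w' e, hw, hw'] at h
  simp only [add_mul] at h
  rw [mul_comm w' w, mul_comm (w * w') e, mul_comm (e * (w * w')) e, mul_comm w e,
    mul_comm w' e, mul_comm (e * w) w', mul_comm (e * w') w] at h
  refine sub_eq_zero.mp (h2 _ ?_)
  linear_combination (norm := module) h

theorem peirceProj1_mem (x : J) : peirceProj1 e x ∈ peirce1 e := by
  rw [mem_peirce1, peirceProj1]
  simp only [mul_sub, mul_smul_comm]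
  linear_combination (norm := module) peirce_cubic h2 he x

theorem peirceProjHalf_mem (x : J) : peirceProjHalf e x ∈ peirceHalf e := by
  rw [mem_peirceHalf, peirceProjHalf]
  simp only [mul_sub, mul_smul_comm]
  linear_combination (norm := module) (-4 : ℤ) • peirce_cubic h2 he x

theorem peirceProj0_mem (x : J) : peirceProj0 e x ∈ peirce0 e := by
  rw [mem_peirce0, peirceProj0]
  simp only [mul_sub, mul_add, mul_smul_comm]
  linear_combination (norm := module) peirce_cubic h2 he x

theorem mem_peirce0_of_chainMul_replicate_eq_zero {u : J} {k : ℕ} (hk : k ≠ 0)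
    (h : chainMul (.replicate k (e + e)) u = 0) : u ∈ peirce0 e := by
  have hu := peirceProj1_add_peirceProjHalf_add_peirceProj0 e u
  rw [← hu, chainMul_add, chainMul_add, chainMul_replicate_of_mem_peirceHalf
    (peirceProjHalf_mem h2 he u), chainMul_replicate_of_mem_peirce0 (peirceProj0_mem h2 he u) hk,
    add_zero, add_eq_zero_iff_of_mem_peirce1_of_mem_peirceHalf
    (chainMul_replicate_mem_peirce1 (peirceProj1_mem h2 he u) k) (peirceProjHalf_mem h2 he u)] at h
  rw [← hu, eq_zero_of_chainMul_replicate_eq_zero h2 (peirceProj1_mem h2 he u) h.1, h.2,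
    zero_add, zero_add]
  exact peirceProj0_mem h2 he u

theorem chainMul_mem_peirceHalf {s : List J} (hs : ∀ t ∈ s, t ∈ peirce0 e) {w : J}
    (hw : w ∈ peirceHalf e) : chainMul s w ∈ peirceHalf e := by
  induction s with
  | nil => exact hw
  | cons t s ih =>
    exact mul_mem_peirceHalf_of_mem_peirce0 h2 he (hs t (by simp))
      (ih fun t' ht' => hs t' (by simp [ht']))

theorem chainMul_mem_peirce0 {s : List J} (hs : ∀ t ∈ s, t ∈ peirce0 e) {x : J}
    (hx : x ∈ peirce0 e) : chainMul s x ∈ peirce0 e := by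
  induction s with
  | nil => exact hx
  | cons t s ih =>
    exact mul_mem_peirce0_of_mem_peirce10 h2 he (hs t (by simp))
      (peirce0_subset_peirce10 (ih fun t' ht' => hs t' (by simp [ht'])))

end PeirceJordan

/-- Conditions (i)–(iii) on `e`; the field `i_j` says that an element of the Peirce component `J_i`
annihilated by all of `J_j` vanishes. -/
structure PeirceNondegenerate {J : Type*} [Mul J] [Add J] [Zero J] (e : J) : Prop where
  one_half : ∀ a ∈ peirce1 e, (∀ t ∈ peirceHalf e, t * a = 0) → a = 0
  zero_half : ∀ a ∈ peirce0 e, (∀ t ∈ peirceHalf e, t * a = 0) → a = 0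
  zero_zero : ∀ a ∈ peirce0 e, (∀ t ∈ peirce0 e, t * a = 0) → a = 0
  half_zero : ∀ a ∈ peirceHalf e, (∀ t ∈ peirce0 e, t * a = 0) → a = 0

section PeirceNondegenerate

variable {J : Type*} [NonUnitalNonAssocCommRing J] [IsCommJordan J] {e : J}
  (h2 : ∀ x : J, x + x = 0 → x = 0) (he : e * e = e) (hc : PeirceNondegenerate e)
include h2 he hc

theorem eq_zero_of_forall_chainMul_peirce0_eq_zero (k : ℕ) {x : J} (hx : x ∈ peirce0 e)
    (h : ∀ s : List J, s.length = k → (∀ t ∈ s, t ∈ peirce0 e) →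
      ∀ t ∈ peirce0 e, chainMul s (t * x) = 0) : x = 0 := by
  induction k generalizing x with
  | zero => exact hc.zero_zero x hx fun t ht => h [] rfl (by simp) t ht
  | succ k ih =>
    refine hc.zero_zero x hx fun t ht => ih ?_ fun s hs hs0 t' ht' => ?_
    · exact mul_mem_peirce0_of_mem_peirce10 h2 he ht (peirce0_subset_peirce10 hx)
    · simpa using h (s ++ [t']) (by simp [hs])
        (List.forall_mem_append.mpr ⟨hs0, List.forall_mem_singleton.mpr ht'⟩) t ht

theorem eq_zero_of_forall_chainMul_eq_zero {k : ℕ} {u : J}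
    (h : ∀ s : List J, s.length = k → chainMul s u = 0) : u = 0 := by
  cases k with
  | zero => exact h [] rfl
  | succ k =>
    have hu : u ∈ peirce0 e :=
      mem_peirce0_of_chainMul_replicate_eq_zero h2 he k.succ_ne_zero (h _ List.length_replicate)
    exact eq_zero_of_forall_chainMul_peirce0_eq_zero h2 he hc k hu fun s hs _ t _ => by
      simpa using h (s ++ [t]) (by simp [hs])

theorem mem_peirce1_of_forall_peirce0_mul_eq_zero {x : J} (hx : ∀ t ∈ peirce0 e, t * x = 0) :
    x ∈ peirce1 e := by
  have hx1 := peirceProj1_mem h2 he x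
  have hxh := peirceProjHalf_mem h2 he x
  have hx0 := peirceProj0_mem h2 he x
  have hdec := peirceProj1_add_peirceProjHalf_add_peirceProj0 e x
  have hsplit (t : J) (ht : t ∈ peirce0 e) :
      t * peirceProjHalf e x = 0 ∧ t * peirceProj0 e x = 0 := by
    have h := hx t ht
    rw [← hdec, mul_add, mul_add, mul_comm t,
      mul_eq_zero_of_mem_peirce1_of_mem_peirce0 h2 he hx1 ht, zero_add] at h
    exact (add_eq_zero_iff_of_mem_peirceHalf_of_mem_peirce0
      (mul_mem_peirceHalf_of_mem_peirce0 h2 he ht hxh)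
      (mul_mem_peirce0_of_mem_peirce10 h2 he ht (peirce0_subset_peirce10 hx0))).mp h
  rw [← hdec, hc.half_zero _ hxh fun t ht => (hsplit t ht).1,
    hc.zero_zero _ hx0 fun t ht => (hsplit t ht).2, add_zero, add_zero]
  exact hx1

end PeirceNondegenerate

section NMulIso

variable {J J' : Type*} [NonUnitalNonAssocCommRing J] [IsCommJordan J] [NonUnitalNonAssocRing J']
  {e : J} {φ : J → J'} {m : ℕ}
  (h2 : ∀ x : J, x + x = 0 → x = 0) (he : e * e = e) (hc : PeirceNondegenerate e)
  (hmul : IsNMulMap (m + 2) φ) (hφ : Function.Bijective φ)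
include h2 he hc hmul hφ

theorem mul_eq_mul_of_map_eq_add {A B C t : J} (h : φ C = φ A + φ B) (ht : t * A = 0) :
    t * C = t * B := by
  refine sub_eq_zero.mp (eq_zero_of_forall_chainMul_eq_zero h2 he hc (k := m) fun s hs => ?_)
  have hs' := hmul.map_chainMul_of_map_eq_add h (s ++ [t]) (by simp [hs])
  rw [chainMul_concat, chainMul_concat, chainMul_concat, ht, chainMul_zero, hmul.map_zero hφ.2,
    zero_add] at hs'
  rw [chainMul_sub, hφ.1 hs', sub_self]

theorem mul_eq_zero_of_map_add_add_eq_add {a y x w : J} (h : φ (a + y + x) = φ a + φ y)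
    (hy : y ∈ peirceHalf e) (hw : w ∈ peirceHalf e) (haw : a * w ∈ peirceHalf e)
    (hxw : x * w ∈ peirceHalf e) : x * w = 0 := by
  set G : J → J := fun z =>
    chainMul (.replicate (m + 1) (e + e)) (chainMul (.replicate m (e + e)) z)
  have hG : φ (G ((a + y + x) * w)) = φ (G (y * w)) + φ (G (a * w)) := by
    rw [add_comm (φ (G _))]
    exact hmul.map_chainMul_of_map_eq_add (hmul.map_chainMul_mul_of_map_eq_add h _ w (by simp)) _
      (by simp)
  -- `y w ∈ J₁ ⊕ J₀`, so one more power of `2e` puts it into `J₁`, which `J₀` annihilates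
  have hyw : G (y * w) ∈ peirce1 e :=
    chainMul_replicate_mem_peirce1_of_mem_peirce10 (chainMul_replicate_mem_peirce10
      (mul_mem_peirce10_of_mem_peirceHalf h2 he hy hw) m) m.succ_ne_zero
  refine hc.half_zero _ hxw fun t ht => ?_
  have hty : t * G (y * w) = 0 := by
    rw [mul_comm]; exact mul_eq_zero_of_mem_peirce1_of_mem_peirce0 h2 he hyw ht
  have key := mul_eq_mul_of_map_eq_add h2 he hc hmul hφ hG hty
  simp only [G, add_mul, chainMul_add, chainMul_replicate_of_mem_peirceHalf haw,
    chainMul_replicate_of_mem_peirceHalf hxw, mul_add] at key hty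
  rwa [hty, add_zero, add_eq_left] at key

theorem map_add_of_mem_peirce1_of_mem_peirceHalf {p y : J} (hp : p ∈ peirce1 e)
    (hy : y ∈ peirceHalf e) : φ (p + y) = φ p + φ y := by
  obtain ⟨C, hC⟩ := hφ.2 (φ p + φ y)
  obtain ⟨x, rfl⟩ : ∃ x, C = p + y + x := ⟨C - p - y, by abel⟩
  have hx : x ∈ peirce1 e := mem_peirce1_of_forall_peirce0_mul_eq_zero h2 he hc fun t ht => by
    have htp : t * p = 0 := by
      rw [mul_comm]; exact mul_eq_zero_of_mem_peirce1_of_mem_peirce0 h2 he hp ht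
    have key := mul_eq_mul_of_map_eq_add h2 he hc hmul hφ hC htp
    rwa [mul_add, mul_add, htp, zero_add, add_eq_left] at key
  have hx0 : x = 0 := hc.one_half x hx fun w hw => by
    rw [mul_comm]
    exact mul_eq_zero_of_map_add_add_eq_add h2 he hc hmul hφ hC hy hw
      (mul_mem_peirceHalf_of_mem_peirce1 h2 he hp hw)
      (mul_mem_peirceHalf_of_mem_peirce1 h2 he hx hw)
  rw [← hC, hx0, add_zero]

theorem map_add_of_mem_peirceHalf_of_mem_peirce0 {y q : J} (hy : y ∈ peirceHalf e)
    (hq : q ∈ peirce0 e) : φ (y + q) = φ y + φ q := by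
  obtain ⟨C, hC⟩ := hφ.2 (φ q + φ y)
  obtain ⟨x, rfl⟩ : ∃ x, C = q + y + x := ⟨C - q - y, by abel⟩
  have hCy : (e + e) * (q + y + x) = y := by
    refine sub_eq_zero.mp (eq_zero_of_forall_chainMul_eq_zero h2 he hc (k := m) fun s hs => ?_)
    have hs' := hmul.map_chainMul_of_map_eq_add hC (s ++ [e + e]) (by simp [hs])
    rw [chainMul_concat, chainMul_concat, chainMul_concat, add_mul e e q, hq, add_zero,
      chainMul_zero, hmul.map_zero hφ.2, zero_add, add_mul e e y, hy] at hs'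
    rw [chainMul_sub, hφ.1 hs', sub_self]
  have hx : x ∈ peirce0 e := by
    rw [mul_add, mul_add, add_mul e e q, hq, add_zero, add_mul e e y, hy, zero_add, add_eq_left,
      add_mul] at hCy
    exact h2 _ hCy
  have hx0 : x = 0 := hc.zero_half x hx fun w hw => by
    rw [mul_comm]
    exact mul_eq_zero_of_map_add_add_eq_add h2 he hc hmul hφ hC hy hw
      (mul_mem_peirceHalf_of_mem_peirce0 h2 he hq hw)
      (mul_mem_peirceHalf_of_mem_peirce0 h2 he hx hw)
  rw [add_comm, add_comm (φ y), ← hC, hx0, add_zero]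

theorem map_add_of_mem_peirceHalf_of_mem_peirce10 {y v : J} (hy : y ∈ peirceHalf e)
    (hv : v ∈ peirce10 e) : φ (y + v) = φ y + φ v := by
  obtain ⟨C, hC⟩ := hφ.2 (φ y + φ v)
  obtain ⟨x, rfl⟩ : ∃ x, C = y + v + x := ⟨C - y - v, by abel⟩
  have hGv : chainMul (.replicate (m + 1) (e + e)) v ∈ peirce1 e :=
    chainMul_replicate_mem_peirce1_of_mem_peirce10 hv m.succ_ne_zero
  have hGC : chainMul (.replicate (m + 1) (e + e)) (y + v + x)
      = chainMul (.replicate (m + 1) (e + e)) v + y := by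
    refine hφ.1 <|
      (hmul.map_chainMul_of_map_eq_add hC (.replicate (m + 1) (e + e)) (by simp)).trans ?_
    rw [chainMul_replicate_of_mem_peirceHalf hy,
      map_add_of_mem_peirce1_of_mem_peirceHalf h2 he hc hmul hφ hGv hy, add_comm]
  have hx : x ∈ peirce0 e := by
    refine mem_peirce0_of_chainMul_replicate_eq_zero h2 he m.succ_ne_zero ?_
    rwa [chainMul_add, chainMul_add, chainMul_replicate_of_mem_peirceHalf hy, add_comm y,
      add_eq_left] at hGC
  have hx0 : x = 0 := by
    refine eq_zero_of_forall_chainMul_peirce0_eq_zero h2 he hc m hx fun s hs hs0 t ht => ?_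
    have hs' := hmul.map_chainMul_of_map_eq_add hC (s ++ [t]) (by simp [hs])
    rw [chainMul_concat, chainMul_concat, chainMul_concat,
      ← map_add_of_mem_peirceHalf_of_mem_peirce0 h2 he hc hmul hφ
        (chainMul_mem_peirceHalf h2 he hs0 (mul_mem_peirceHalf_of_mem_peirce0 h2 he ht hy))
        (chainMul_mem_peirce0 h2 he hs0 (mul_mem_peirce0_of_mem_peirce10 h2 he ht hv))] at hs'
    have key := hφ.1 hs'
    rwa [mul_add, mul_add, chainMul_add, chainMul_add, add_eq_left] at key
  rw [← hC, hx0, add_zero]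

theorem map_mul_add_mul_of_mem_peirce0 {w a b : J} (hw : w ∈ peirceHalf e) (ha : a ∈ peirce0 e)
    (hb : b ∈ peirce0 e) : φ (w * a + w * b) = φ (w * a) + φ (w * b) := by
  have hwa : w * a ∈ peirceHalf e := mul_comm a w ▸ mul_mem_peirceHalf_of_mem_peirce0 h2 he ha hw
  have hwb : w * b ∈ peirceHalf e := mul_comm b w ▸ mul_mem_peirceHalf_of_mem_peirce0 h2 he hb hw
  have h2e : e + e ∈ peirce1 e := by rw [mem_peirce1, mul_add, he]
  have hV : chainMul (.replicate m (e + e)) (w * (w * b)) ∈ peirce10 e :=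
    chainMul_replicate_mem_peirce10 (mul_mem_peirce10_of_mem_peirceHalf h2 he hw hwb) m
  have hX : φ (w + (e + e)) = φ w + φ (e + e) := by
    rw [add_comm, add_comm (φ w)]
    exact map_add_of_mem_peirce1_of_mem_peirceHalf h2 he hc hmul hφ h2e hw
  have hY : φ (w * b + a) = φ (w * b) + φ a :=
    map_add_of_mem_peirceHalf_of_mem_peirce0 h2 he hc hmul hφ hwb ha
  have hsplit (u : J) : φ (chainMul (.replicate m (e + e)) (u * (w * b + a)))
      = φ (chainMul (.replicate m (e + e)) (u * (w * b)))
        + φ (chainMul (.replicate m (e + e)) (u * a)) := by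
    have h := hmul.map_chainMul_of_map_eq_add hY (.replicate m (e + e) ++ [u]) (by simp)
    rwa [chainMul_concat, chainMul_concat, chainMul_concat] at h
  have hprod : (w + (e + e)) * (w * b + a) = (w * a + w * b) + w * (w * b) := by
    rw [add_mul, mul_add, mul_add, add_mul e e (w * b), hwb, add_mul e e a, ha, add_zero]
    abel
  have hlhs : φ (chainMul (.replicate m (e + e)) ((w + (e + e)) * (w * b + a)))
      = φ (w * a + w * b) + φ (chainMul (.replicate m (e + e)) (w * (w * b))) := by
    rw [hprod, chainMul_add,
      chainMul_replicate_of_mem_peirceHalf (add_mem_peirceHalf hwa hwb),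
      map_add_of_mem_peirceHalf_of_mem_peirce10 h2 he hc hmul hφ (add_mem_peirceHalf hwa hwb) hV]
  have hw_mul : φ (chainMul (.replicate m (e + e)) (w * (w * b + a)))
      = φ (chainMul (.replicate m (e + e)) (w * (w * b))) + φ (w * a) := by
    rw [hsplit w, chainMul_replicate_of_mem_peirceHalf hwa]
  have he_mul : φ (chainMul (.replicate m (e + e)) ((e + e) * (w * b + a))) = φ (w * b) := by
    rw [hsplit (e + e), add_mul e e (w * b), hwb, add_mul e e a, ha, add_zero, chainMul_zero,
      hmul.map_zero hφ.2, add_zero, chainMul_replicate_of_mem_peirceHalf hwb]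
  have key := hmul.map_chainMul_mul_of_map_eq_add hX (.replicate m (e + e)) (w * b + a) (by simp)
  rw [hlhs, hw_mul, he_mul] at key
  exact add_right_cancel (key.trans (by abel))

theorem map_add_of_mem_peirce0 {a b : J} (ha : a ∈ peirce0 e) (hb : b ∈ peirce0 e) :
    φ (a + b) = φ a + φ b := by
  obtain ⟨C, hC⟩ := hφ.2 (φ a + φ b)
  obtain ⟨x, rfl⟩ : ∃ x, C = a + b + x := ⟨C - a - b, by abel⟩
  have hx : x ∈ peirce0 e := by
    refine mem_peirce0_of_chainMul_replicate_eq_zero h2 he (k := m + 1) m.succ_ne_zero (hφ.1 ?_)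
    rw [hmul.map_zero hφ.2]
    have hG := hmul.map_chainMul_of_map_eq_add hC (.replicate (m + 1) (e + e)) (by simp)
    rwa [chainMul_add, chainMul_add, chainMul_replicate_of_mem_peirce0 ha m.succ_ne_zero,
      chainMul_replicate_of_mem_peirce0 hb m.succ_ne_zero, zero_add, zero_add, hmul.map_zero hφ.2,
      add_zero] at hG
  have hx0 : x = 0 := hc.zero_half x hx fun w hw => by
    have hC' : φ ((a + b + x) * w) = φ (w * a + w * b) := by
      have h := hmul.map_chainMul_mul_of_map_eq_add hC (.replicate m (e + e)) w (by simp)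
      rwa [chainMul_replicate_of_mem_peirceHalf (mul_mem_peirceHalf_of_mem_peirce0 h2 he
        (add_mem_peirce0 (add_mem_peirce0 ha hb) hx) hw), chainMul_replicate_of_mem_peirceHalf
        (mul_mem_peirceHalf_of_mem_peirce0 h2 he ha hw), chainMul_replicate_of_mem_peirceHalf
        (mul_mem_peirceHalf_of_mem_peirce0 h2 he hb hw), mul_comm a w, mul_comm b w,
        ← map_mul_add_mul_of_mem_peirce0 h2 he hc hmul hφ hw ha hb] at h
    have key := hφ.1 hC'
    rw [mul_comm w a, mul_comm w b, add_mul, add_mul, add_eq_left] at key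
    rw [mul_comm]; exact key
  rw [← hC, hx0, add_zero]

end NMulIso

theorem nMulIso_additive_on_zero_general {J J' : Type*} [NonUnitalNonAssocCommRing J] [NonUnitalNonAssocCommRing J']
    (hJordan : ∀ x y : J, ((x * x) * y) * x = (x * x) * (y * x))
    (h2 : ∀ x : J, x + x = 0 → x = 0)
    (e : J) (hid : e * e = e)
    (hcond1 : ∀ a ∈ peirce1 e, (∀ t ∈ peirceHalf e, t * a = 0) → a = 0)
    (hcond1' : ∀ a ∈ peirce0 e, (∀ t ∈ peirceHalf e, t * a = 0) → a = 0)
    (hcond2 : ∀ a ∈ peirce0 e, (∀ t ∈ peirce0 e, t * a = 0) → a = 0)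
    (hcond3 : ∀ a ∈ peirceHalf e, (∀ t ∈ peirce0 e, t * a = 0) → a = 0)
    (n : ℕ) (hn : 2 ≤ n) (φ : J → J')
    (hbij : Function.Bijective φ) (hmul : IsNMulMap n φ) :
    ∀ a ∈ peirce0 e, ∀ b ∈ peirce0 e,
      φ (a + b) = φ a + φ b := by
  obtain ⟨m, rfl⟩ : ∃ m, n = m + 2 := ⟨n - 2, by omega⟩
  have := IsCommJordan.of_jordan_identity hJordan
  exact fun a ha b hb =>
    map_add_of_mem_peirce0 h2 hid ⟨hcond1, hcond1', hcond2, hcond3⟩ hmul hbij ha hb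

theorem nMulIso_additive_on_zero {J J' : Type*} [NonUnitalNonAssocCommRing J] [NonUnitalNonAssocCommRing J']
    (hJordan : ∀ x y : J, ((x * x) * y) * x = (x * x) * (y * x))
    (hJordan' : ∀ x y : J', ((x * x) * y) * x = (x * x) * (y * x))
    (h2 : ∀ x : J, x + x = 0 → x = 0)
    (e : J) (hid : e * e = e) (hne : e ≠ 0) (hnu : ∃ x : J, e * x ≠ x)
    (hcond1 : ∀ a ∈ peirce1 e, (∀ t ∈ peirceHalf e, t * a = 0) → a = 0)
    (hcond1' : ∀ a ∈ peirce0 e, (∀ t ∈ peirceHalf e, t * a = 0) → a = 0)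
    (hcond2 : ∀ a ∈ peirce0 e, (∀ t ∈ peirce0 e, t * a = 0) → a = 0)
    (hcond3 : ∀ a ∈ peirceHalf e, (∀ t ∈ peirce0 e, t * a = 0) → a = 0)
    (n : ℕ) (hn : 2 ≤ n) (φ : J → J')
    (hbij : Function.Bijective φ) (hmul : IsNMulMap n φ) :
    ∀ a ∈ peirce0 e, ∀ b ∈ peirce0 e,
      φ (a + b) = φ a + φ b :=
  nMulIso_additive_on_zero_general hJordan h2 e hid hcond1 hcond1' hcond2 hcond3 n hn φ hbij hmul
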